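/- arXiv:2506.21733 — 2 statements merged into one kernel-verified Lean document; each statement's English description precedes it below -/
import Mathlib

section
/- Let ℓ: ℝ^p → ℝ be twice continuously differentiable with maximizer θ̂, and suppose the Hessian satisfies −∇²ℓ(θ) ⪰ η·n·I_p (all eigenvalues of −∇²ℓ at least η·n) on the Euclidean ball B(θ̂, δ), where η > 0, n ≥ 1. Then for any 0 < γ ≤ δ, ∫_{B(θ̂,δ) \ B(θ̂,γ)} exp(ℓ(θ) − ℓ(θ̂)) dθ ≤ (2π/(η n))^{p/2} · P(χ²_p ≥ η n γ²), where χ²_p is a chi-squared random variable with p degrees of freedom. -/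
/-!
By Taylor's theorem at the critical point `θ̂`, the Hessian bound gives
`ℓ θ - ℓ θ̂ ≤ -(ηn/2) ‖θ - θ̂‖²` on the ball `B(θ̂, δ)`, so the integrand is dominated by an
unnormalised Gaussian. Enlarging the annulus to the complement of `B(θ̂, γ)` and passing to polar
coordinates turns the Gaussian integral into a radial one, which the substitution `x = ηn r²`
identifies with `(2π/(ηn))^{p/2}` times the upper tail of the `χ²_p` density.
-/

open MeasureTheory Real Set Metric

noncomputable def chiSqDensity (p : ℕ) (x : ℝ) : ℝ :=
  x ^ ((p : ℝ) / 2 - 1) * exp (-x / 2) / (2 ^ ((p : ℝ) / 2) * Gamma ((p : ℝ) / 2))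

lemma sub_le_neg_half_of_deriv_two_le {g g' g'' : ℝ → ℝ} {k : ℝ}
    (hg : ∀ t, HasDerivAt g (g' t) t) (hg' : ∀ t, HasDerivAt g' (g'' t) t)
    (hg'₀ : g' 0 = 0) (hk : ∀ t ∈ Icc (0 : ℝ) 1, g'' t ≤ -k) :
    g 1 - g 0 ≤ -(k / 2) := by
  have slope_nonpos : ∀ t ∈ Icc (0 : ℝ) 1, g' t + k * t ≤ 0 := by
    have hd : ∀ t, HasDerivAt (fun t => g' t + k * t) (g'' t + k) t := fun t =>
      ((hg' t).add ((hasDerivAt_id t).const_mul k)).congr_deriv (by simp)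
    have hanti : AntitoneOn (fun t => g' t + k * t) (Icc 0 1) :=
      antitoneOn_of_hasDerivWithinAt_nonpos (convex_Icc 0 1)
        (fun t _ => (hd t).continuousAt.continuousWithinAt)
        (fun t _ => (hd t).hasDerivWithinAt) fun t ht => by linarith [hk t (interior_subset ht)]
    intro t ht
    simpa [hg'₀] using hanti (left_mem_Icc.2 zero_le_one) ht ht.1
  have hd : ∀ t, HasDerivAt (fun t => g t + k / 2 * t ^ 2) (g' t + k * t) t := fun t =>
    ((hg t).add ((hasDerivAt_pow 2 t).const_mul (k / 2))).congr_deriv (by push_cast; ring)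
  have hanti : AntitoneOn (fun t => g t + k / 2 * t ^ 2) (Icc 0 1) :=
    antitoneOn_of_hasDerivWithinAt_nonpos (convex_Icc 0 1)
      (fun t _ => (hd t).continuousAt.continuousWithinAt)
      (fun t _ => (hd t).hasDerivWithinAt) fun t ht => slope_nonpos t (interior_subset ht)
  have := hanti (left_mem_Icc.2 zero_le_one) (right_mem_Icc.2 zero_le_one) zero_le_one
  simp only at this
  linarith

lemma sub_le_neg_mul_norm_sq_of_iteratedFDeriv_two_le {E : Type*} [NormedAddCommGroup E]
    [NormedSpace ℝ E] {f : E → ℝ} {s : Set E} {x₀ x : E} {c : ℝ} (hf : ContDiff ℝ 2 f)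
    (hs : Convex ℝ s) (hx₀ : x₀ ∈ s) (hx : x ∈ s) (hcrit : fderiv ℝ f x₀ = 0)
    (hhess : ∀ y ∈ s, ∀ v, iteratedFDeriv ℝ 2 f y ![v, v] ≤ -c * ‖v‖ ^ 2) :
    f x - f x₀ ≤ -(c / 2) * ‖x - x₀‖ ^ 2 := by
  set v := x - x₀
  set L : ℝ → E := fun t => x₀ + t • v
  have hL : ∀ t, HasDerivAt L v t := fun t =>
    (((hasDerivAt_id t).smul_const v).const_add x₀).congr_deriv (one_smul ℝ v)
  have hdf : Differentiable ℝ f := hf.differentiable (by norm_num)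
  have hdf' : Differentiable ℝ (fderiv ℝ f) :=
    (hf.fderiv_right (m := 1) (by norm_num)).differentiable (by norm_num)
  have hg : ∀ t, HasDerivAt (f ∘ L) (fderiv ℝ f (L t) v) t := fun t =>
    (hdf (L t)).hasFDerivAt.comp_hasDerivAt t (hL t)
  have hg' : ∀ t, HasDerivAt (fun t => fderiv ℝ f (L t) v)
      (fderiv ℝ (fderiv ℝ f) (L t) v v) t := fun t => by
    simpa using ((hdf' (L t)).hasFDerivAt.comp_hasDerivAt t (hL t)).clm_apply
      (hasDerivAt_const t v)
  have hk : ∀ t ∈ Icc (0 : ℝ) 1, fderiv ℝ (fderiv ℝ f) (L t) v v ≤ -(c * ‖v‖ ^ 2) := by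
    intro t ht
    have := hhess (L t) (hs.add_smul_sub_mem hx₀ hx ht) v
    rw [iteratedFDeriv_two_apply] at this
    simpa using this
  have := sub_le_neg_half_of_deriv_two_le hg hg' (by simp [L, hcrit]) hk
  simp only [Function.comp, L, one_smul, zero_smul, add_zero, v, add_sub_cancel] at this
  linarith

lemma integrable_exp_neg_mul_sq_norm_sub {V : Type*} [NormedAddCommGroup V]
    [InnerProductSpace ℝ V] [FiniteDimensional ℝ V] [MeasurableSpace V] [BorelSpace V]
    {b : ℝ} (hb : 0 < b) (w : V) : Integrable (fun v : V => exp (-b * ‖v - w‖ ^ 2)) := by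
  have hcomplex := (GaussianFourier.integrable_cexp_neg_mul_sq_norm_add (V := V)
    (b := (b : ℂ)) (by simpa using hb) 0 0).norm
  have hcentered : Integrable (fun v : V => exp (-b * ‖v‖ ^ 2)) :=
    hcomplex.congr (Filter.Eventually.of_forall fun v => by
      simp only [zero_mul, add_zero, ← Complex.ofReal_pow, ← Complex.ofReal_neg,
        ← Complex.ofReal_mul, Complex.norm_exp, Complex.ofReal_re])
  exact hcentered.comp_sub_right w

lemma setIntegral_compl_closedBall_fun_norm_addHaar {E F : Type*} [NormedAddCommGroup E]
    [NormedSpace ℝ E] [Nontrivial E] [MeasurableSpace E] [BorelSpace E] [FiniteDimensional ℝ E]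
    (μ : Measure E) [μ.IsAddHaarMeasure] [NormedAddCommGroup F] [NormedSpace ℝ F]
    {r : ℝ} (hr : 0 ≤ r) (f : ℝ → F) :
    ∫ x in (closedBall (0 : E) r)ᶜ, f ‖x‖ ∂μ =
      Module.finrank ℝ E • μ.real (ball 0 1) •
        ∫ y in Ioi r, y ^ (Module.finrank ℝ E - 1) • f y := by
  have hball : (closedBall (0 : E) r)ᶜ = norm ⁻¹' Ioi r := by ext; simp
  rw [← integral_indicator measurableSet_closedBall.compl, hball]
  have hcomp (x : E) : (norm ⁻¹' Ioi r).indicator (fun x => f ‖x‖) x = (Ioi r).indicator f ‖x‖ :=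
    indicator_comp_right (g := f) norm
  simp_rw [hcomp, integral_fun_norm_addHaar μ ((Ioi r).indicator f),
    ← indicator_smul_apply (Ioi r) (fun y => y ^ (Module.finrank ℝ E - 1)) f]
  rw [setIntegral_indicator measurableSet_Ioi, inter_eq_self_of_subset_right (Ioi_subset_Ioi hr)]

lemma image_const_mul_sq_Ici {c γ : ℝ} (hc : 0 < c) (hγ : 0 ≤ γ) :
    (fun r => c * r ^ 2) '' Ici γ = Ici (c * γ ^ 2) := by
  ext x
  constructor
  · rintro ⟨r, hr, rfl⟩
    have : γ ^ 2 ≤ r ^ 2 := pow_le_pow_left₀ hγ hr 2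
    exact mul_le_mul_of_nonneg_left this hc.le
  · intro hx
    have hxc : γ ^ 2 ≤ x / c := (le_div_iff₀' hc).2 hx
    refine ⟨√(x / c), Real.le_sqrt_of_sq_le hxc, ?_⟩
    simp only
    rw [sq_sqrt ((sq_nonneg γ).trans hxc), mul_div_cancel₀ _ hc.ne']

lemma setIntegral_Ici_comp_const_mul_sq {c γ : ℝ} (hc : 0 < c) (hγ : 0 ≤ γ) (g : ℝ → ℝ) :
    ∫ x in Ici (c * γ ^ 2), g x = ∫ r in Ioi γ, 2 * c * r * g (c * r ^ 2) := by
  have hderiv : ∀ r ∈ Ici γ, HasDerivWithinAt (fun r => c * r ^ 2) (2 * c * r) (Ici γ) r :=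
    fun r _ =>
      (((hasDerivAt_pow 2 r).const_mul c).congr_deriv (by push_cast; ring)).hasDerivWithinAt
  have hinj : InjOn (fun r => c * r ^ 2) (Ici γ) := fun a ha b hb hab => by
    have := mul_left_cancel₀ hc.ne' hab
    exact (pow_left_inj₀ (hγ.trans ha) (hγ.trans hb) two_ne_zero).1 this
  rw [← image_const_mul_sq_Ici hc hγ,
    integral_image_eq_integral_abs_deriv_smul measurableSet_Ici hderiv hinj,
    integral_Ici_eq_integral_Ioi]
  refine setIntegral_congr_fun measurableSet_Ioi fun r hr => ?_
  have hr₀ : 0 ≤ r := hγ.trans hr.le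
  rw [smul_eq_mul, abs_of_nonneg (by positivity)]

lemma finrank_mul_volume_real_ball_one {E : Type*} [NormedAddCommGroup E] [InnerProductSpace ℝ E]
    [FiniteDimensional ℝ E] [Nontrivial E] [MeasurableSpace E] [BorelSpace E] :
    (Module.finrank ℝ E : ℝ) * volume.real (ball (0 : E) 1) =
      2 * π ^ ((Module.finrank ℝ E : ℝ) / 2) / Gamma ((Module.finrank ℝ E : ℝ) / 2) := by
  have hd : (0 : ℝ) < Module.finrank ℝ E := by exact_mod_cast Module.finrank_pos
  have hΓ : 0 < Gamma ((Module.finrank ℝ E : ℝ) / 2) := Gamma_pos_of_pos (by positivity)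
  rw [measureReal_def, InnerProductSpace.volume_ball, ENNReal.ofReal_one, one_pow, one_mul,
    ENNReal.toReal_ofReal (by positivity), sqrt_eq_rpow, ← rpow_natCast, ← rpow_mul pi_pos.le,
    Gamma_add_one (by positivity)]
  field_simp

lemma two_pi_div_rpow_mul_chiSqDensity_const_mul_sq {d : ℕ} (hd : 1 ≤ d) {c r : ℝ}
    (hc : 0 < c) (hr : 0 < r) :
    (2 * π / c) ^ ((d : ℝ) / 2) * (2 * c * r * chiSqDensity d (c * r ^ 2)) =
      2 * π ^ ((d : ℝ) / 2) / Gamma ((d : ℝ) / 2) * (r ^ (d - 1) * exp (-(c / 2) * r ^ 2)) := by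
  set a : ℝ := (d : ℝ) / 2
  have hΓ : 0 < Gamma a := Gamma_pos_of_pos (by positivity)
  have hr2a : r ^ (2 * a) = (r ^ 2) ^ a := by
    rw [← rpow_natCast, ← rpow_mul hr.le]
    norm_num
  have hcr : (c * r ^ 2) ^ (a - 1) = c ^ a * r ^ (2 * a) / (c * r ^ 2) := by
    rw [rpow_sub_one (by positivity), mul_rpow hc.le (by positivity), hr2a]
  have hpow : r ^ (d - 1) = r ^ (2 * a) / r := by
    rw [show 2 * a = d by ring, rpow_natCast, eq_div_iff hr.ne', pow_sub_one_mul (by omega)]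
  have hscale : (2 * π / c) ^ a = 2 ^ a * π ^ a / c ^ a := by
    rw [div_rpow (by positivity) hc.le, mul_rpow zero_le_two pi_pos.le]
  have hexp : exp (-(c * r ^ 2) / 2) = exp (-(c / 2) * r ^ 2) := by ring_nf
  have : 0 < c ^ a := by positivity
  have : 0 < (2 : ℝ) ^ a := by positivity
  have : 0 < r ^ (2 * a) := by positivity
  rw [chiSqDensity, hcr, hpow, hscale, hexp]
  field_simp
  ring

lemma setIntegral_compl_closedBall_gaussian {E : Type*} [NormedAddCommGroup E]
    [InnerProductSpace ℝ E] [FiniteDimensional ℝ E] [Nontrivial E] [MeasurableSpace E]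
    [BorelSpace E] {c γ : ℝ} (hc : 0 < c) (hγ : 0 ≤ γ) :
    ∫ x in (closedBall (0 : E) γ)ᶜ, exp (-(c / 2) * ‖x‖ ^ 2) =
      (2 * π / c) ^ ((Module.finrank ℝ E : ℝ) / 2) *
        ∫ x in Ici (c * γ ^ 2), chiSqDensity (Module.finrank ℝ E) x := by
  rw [setIntegral_compl_closedBall_fun_norm_addHaar volume hγ (fun r => exp (-(c / 2) * r ^ 2)),
    setIntegral_Ici_comp_const_mul_sq hc hγ, ← integral_const_mul, nsmul_eq_mul, smul_eq_mul,
    ← mul_assoc, finrank_mul_volume_real_ball_one, ← integral_const_mul]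
  refine setIntegral_congr_fun measurableSet_Ioi fun r hr => ?_
  rw [two_pi_div_rpow_mul_chiSqDensity_const_mul_sq Module.finrank_pos hc (hγ.trans_lt hr),
    smul_eq_mul]

theorem annulus_integral_bound_general (p : ℕ) (hp : 1 ≤ p)
    (ℓ : EuclideanSpace ℝ (Fin p) → ℝ) (θh : EuclideanSpace ℝ (Fin p))
    (η n δ γ : ℝ) (hη : 0 < η) (hn : 1 ≤ n) (hγ : 0 < γ)
    (hsm : ContDiff ℝ 2 ℓ)
    (hgrad : fderiv ℝ ℓ θh = 0)
    (hhess : ∀ θ ∈ Metric.closedBall θh δ, ∀ v : EuclideanSpace ℝ (Fin p),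
      iteratedFDeriv ℝ 2 ℓ θ ![v, v] ≤ -(η * n) * ‖v‖^2) :
    ∫ θ in Metric.closedBall θh δ \ Metric.closedBall θh γ, Real.exp (ℓ θ - ℓ θh) ≤
      (2 * Real.pi / (η * n)) ^ ((p : ℝ)/2) *
        ∫ x in Set.Ici (η * n * γ^2),
          x ^ ((p : ℝ)/2 - 1) * Real.exp (-x/2) /
            (2 ^ ((p : ℝ)/2) * Real.Gamma ((p : ℝ)/2)) := by
  have hc : 0 < η * n := mul_pos hη (by linarith)
  have : Nonempty (Fin p) := ⟨⟨0, hp⟩⟩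
  have hgauss := integrable_exp_neg_mul_sq_norm_sub (half_pos hc) θh
  have hshift : (closedBall θh γ)ᶜ = (· - θh) ⁻¹' (closedBall 0 γ)ᶜ := by
    ext; simp [dist_eq_norm]
  calc ∫ θ in closedBall θh δ \ closedBall θh γ, exp (ℓ θ - ℓ θh)
      ≤ ∫ θ in closedBall θh δ \ closedBall θh γ, exp (-(η * n / 2) * ‖θ - θh‖ ^ 2) := by
        refine setIntegral_mono_on ?_ hgauss.integrableOn
          (measurableSet_closedBall.diff measurableSet_closedBall) fun θ hθ => ?_
        · exact ((hsm.continuous.sub continuous_const).rexp.continuousOn.integrableOn_compact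
            (isCompact_closedBall θh δ)).mono_set sdiff_subset
        · exact exp_le_exp.2 <| sub_le_neg_mul_norm_sq_of_iteratedFDeriv_two_le hsm
            (convex_closedBall θh δ) (mem_closedBall_self (dist_nonneg.trans hθ.1)) hθ.1
            hgrad hhess
    _ ≤ ∫ θ in (closedBall θh γ)ᶜ, exp (-(η * n / 2) * ‖θ - θh‖ ^ 2) :=
        setIntegral_mono_set hgauss.integrableOn
          (Filter.Eventually.of_forall fun _ => (exp_pos _).le)
          (sdiff_subset_compl _ _).eventuallyLE
    _ = ∫ x in (closedBall (0 : EuclideanSpace ℝ (Fin p)) γ)ᶜ, exp (-(η * n / 2) * ‖x‖ ^ 2) := by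
        rw [hshift]
        exact (measurePreserving_sub_right volume θh).setIntegral_preimage_emb
          (measurableEmbedding_subRight θh) (fun x => exp (-(η * n / 2) * ‖x‖ ^ 2)) _
    _ = _ := by
        rw [setIntegral_compl_closedBall_gaussian hc hγ.le, finrank_euclideanSpace_fin]
        rfl

/-- Truncation bound: if −∇²ℓ ⪰ ηn·I on B(θ̂,δ) then the integral of
exp(ℓ − ℓ(θ̂)) over the annulus B(θ̂,δ)∖B(θ̂,γ) is at most
(2π/(ηn))^{p/2}·P(χ²_p ≥ ηnγ²), the probability written via the χ²_p density. -/
theorem annulus_integral_bound (p : ℕ) (hp : 1 ≤ p)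
    (ℓ : EuclideanSpace ℝ (Fin p) → ℝ) (θh : EuclideanSpace ℝ (Fin p))
    (η n δ γ : ℝ) (hη : 0 < η) (hn : 1 ≤ n) (hγ : 0 < γ) (hγδ : γ ≤ δ)
    (hsm : ContDiff ℝ 2 ℓ)
    (hmax : ∀ θ, ℓ θ ≤ ℓ θh)
    (hgrad : fderiv ℝ ℓ θh = 0)
    (hhess : ∀ θ ∈ Metric.closedBall θh δ, ∀ v : EuclideanSpace ℝ (Fin p),
      iteratedFDeriv ℝ 2 ℓ θ ![v, v] ≤ -(η * n) * ‖v‖^2) :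
    ∫ θ in Metric.closedBall θh δ \ Metric.closedBall θh γ, Real.exp (ℓ θ - ℓ θh) ≤
      (2 * Real.pi / (η * n)) ^ ((p : ℝ)/2) *
        ∫ x in Set.Ici (η * n * γ^2),
          x ^ ((p : ℝ)/2 - 1) * Real.exp (-x/2) /
            (2 ^ ((p : ℝ)/2) * Real.Gamma ((p : ℝ)/2)) :=
  annulus_integral_bound_general p hp ℓ θh η n δ γ hη hn hγ hsm hgrad hhess
end

section
/- For a function f: [0,1]^p → ℝ that is p times continuously differentiable, the Hardy–Krause variation satisfies V_HK(f) ≤ Σ_{∅ ≠ α ⊆ {1,...,p}} ∫_{[0,1]^{|α|}} |∂^{|α|} f / ∂x_α (x_α, 1_{−α})| dx_α. -/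
open MeasureTheory

/-- Alternating (inclusion-exclusion) difference of `f` over the box with corners
`a` (lower) and `b` (upper), taken in the coordinates of `α` only. -/
def boxDiffOn (p : ℕ) (α : Finset (Fin p)) (f : (Fin p → ℝ) → ℝ)
    (a b : Fin p → ℝ) : ℝ :=
  ∑ s ∈ α.powerset, (-1 : ℝ) ^ s.card * f (fun j => if j ∈ s then a j else b j)

/-- The set of grid sums defining the Vitali variation of `f` in the coordinates of
`α`, with the remaining coordinates anchored at 1. -/
def vitaliSet (p : ℕ) (α : Finset (Fin p)) (f : (Fin p → ℝ) → ℝ) : Set ℝ :=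
  {v | ∃ (m : Fin p → ℕ) (t : Fin p → ℕ → ℝ),
      (∀ j ∈ α, Monotone (t j) ∧ t j 0 = 0 ∧ t j (m j) = 1) ∧
      v = ∑ i ∈ Fintype.piFinset (fun j => Finset.range (if j ∈ α then m j else 1)),
          |boxDiffOn p α f (fun j => if j ∈ α then t j (i j) else 1)
            (fun j => if j ∈ α then t j (i j + 1) else 1)|}

/-- The Vitali variation of `f` in the coordinates of `α` (anchored at 1 elsewhere). -/
noncomputable def vitaliVar (p : ℕ) (α : Finset (Fin p)) (f : (Fin p → ℝ) → ℝ) : ℝ :=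
  sSup (vitaliSet p α f)

/-- The Hardy–Krause variation of `f` (anchored at 1): sum of the Vitali variations
over all nonempty subsets of coordinates. -/
noncomputable def hkVar (p : ℕ) (f : (Fin p → ℝ) → ℝ) : ℝ :=
  ∑ α ∈ (Finset.univ : Finset (Fin p)).powerset.filter (fun α => α.Nonempty),
    vitaliVar p α f

/-- Iterated partial derivative of `f` in the coordinates listed in `l`. -/
noncomputable def partialDerivList (p : ℕ) (l : List (Fin p))
    (f : (Fin p → ℝ) → ℝ) : (Fin p → ℝ) → ℝ :=
  l.foldr (fun j g => fun y => fderiv ℝ g y (Pi.single j 1)) f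

/-! On a grid cell `[a, b]`, the alternating sum of `f` over the corners in the coordinates of `α`
is, by the fundamental theorem of calculus applied one coordinate at a time, the integral over
the cell of the mixed partial `∂_α f`, so its absolute value is at most the integral of
`|∂_α f|` over the cell. Outside `α` the corners sit at `1`, which is where `∂_α f` is evaluated.
Taking the cells of a grid to have side `(0, 1]` in the coordinates outside `α`, they are disjoint
subsets of the unit cube, so summing over the cells bounds each Vitali variation by the integral
over `[0, 1]^p`, and summing over `α` bounds the Hardy–Krause variation. -/

open Finset Function
open scoped ENNReal

namespace MeasureTheory

variable {ι : Type*} [Fintype ι] [DecidableEq ι] {X : ι → Type*} [∀ i, MeasurableSpace (X i)]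

theorem lmarginal_eq_lintegral_piecewise (ν : ∀ i, Measure (X i)) [∀ i, SigmaFinite (ν i)]
    (s : Finset ι) (hν : ∀ i ∉ s, IsProbabilityMeasure (ν i)) {F : (∀ i, X i) → ℝ≥0∞}
    (hF : Measurable F) (c : ∀ i, X i) :
    (∫⋯∫⁻_s, F ∂ν) c = ∫⁻ y, F (s.piecewise y c) ∂Measure.pi ν := by
  have : ∀ i : ↥sᶜ, IsProbabilityMeasure (ν i) := fun i => hν i (mem_compl.1 i.2)
  have hconst : (∫⋯∫⁻_s, fun y => F (s.piecewise y c) ∂ν) = fun _ => (∫⋯∫⁻_s, F ∂ν) c := by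
    ext x
    refine lintegral_congr fun y => congrArg F (funext fun i => ?_)
    by_cases hi : i ∈ s <;> simp [updateFinset, hi]
  have hmeas : Measurable fun y => F (s.piecewise y c) :=
    hF.comp (measurable_pi_lambda _ fun i => by
      by_cases hi : i ∈ s <;> simp [Finset.piecewise, hi, measurable_pi_apply])
  rw [lintegral_eq_lmarginal_univ c, ← union_compl s,
    lmarginal_union' _ _ hmeas disjoint_compl_right, hconst]
  simp [lmarginal]

end MeasureTheory

section PartialDerivatives

variable {p : ℕ}

theorem partialDerivList_append_singleton (l : List (Fin p)) (j : Fin p) (f : (Fin p → ℝ) → ℝ) :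
    partialDerivList p (l ++ [j]) f = partialDerivList p l (partialDerivList p [j] f) :=
  List.foldr_append ..

theorem contDiff_partialDerivList {n : ℕ} (l : List (Fin p)) {f : (Fin p → ℝ) → ℝ}
    (hf : ContDiff ℝ (n + l.length) f) : ContDiff ℝ n (partialDerivList p l f) := by
  induction l generalizing n with
  | nil => simpa [partialDerivList] using hf
  | cons j l ih =>
    have hl : ContDiff ℝ (n + 1) (partialDerivList p l f) :=
      ih (by simpa [add_assoc, add_comm 1 (l.length : WithTop ℕ∞)] using hf)
    exact (hl.fderiv_right le_rfl).clm_apply contDiff_const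

theorem hasDerivAt_comp_update {g : (Fin p → ℝ) → ℝ} (hg : Differentiable ℝ g)
    (x : Fin p → ℝ) (j : Fin p) (t : ℝ) :
    HasDerivAt (fun s => g (update x j s)) (partialDerivList p [j] g (update x j t)) t :=
  (hg _).hasFDerivAt.comp_hasDerivAt t (hasDerivAt_update x j t)

end PartialDerivatives

section BoxDifference

variable {p : ℕ}

theorem boxDiffOn_eq_sum_piecewise (α : Finset (Fin p)) (f : (Fin p → ℝ) → ℝ) (a b : Fin p → ℝ) :
    boxDiffOn p α f a b = ∑ s ∈ α.powerset, (-1 : ℝ) ^ s.card * f (s.piecewise a b) :=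
  rfl

@[simp]
theorem boxDiffOn_empty (f : (Fin p → ℝ) → ℝ) (a b : Fin p → ℝ) : boxDiffOn p ∅ f a b = f b := by
  simp [boxDiffOn_eq_sum_piecewise]

theorem boxDiffOn_insert {α : Finset (Fin p)} {j : Fin p} (hj : j ∉ α) {g : (Fin p → ℝ) → ℝ}
    (hg : ContDiff ℝ 1 g) (a b : Fin p → ℝ) :
    boxDiffOn p (insert j α) g a b =
      ∫ t in a j..b j, boxDiffOn p α (partialDerivList p [j] g) a (update b j t) := by
  have hslice : ∀ x, Continuous fun t => partialDerivList p [j] g (update x j t) := fun x =>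
    (contDiff_partialDerivList [j] (n := 0) (by simpa using hg)).continuous.comp
      (continuous_const.update j continuous_id)
  have hftc : ∀ x : Fin p → ℝ, ∫ t in a j..b j, partialDerivList p [j] g (update x j t) =
      g (update x j (b j)) - g (update x j (a j)) := fun x =>
    intervalIntegral.integral_eq_sub_of_hasDerivAt
      (fun t _ => hasDerivAt_comp_update (hg.differentiable one_ne_zero) x j t)
      ((hslice x).intervalIntegrable _ _)
  simp only [boxDiffOn_eq_sum_piecewise]
  rw [intervalIntegral.integral_finsetSum, sum_powerset_insert hj, ← sum_add_distrib]
  · refine sum_congr rfl fun s hs => ?_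
    have hjs : j ∉ s := fun h => hj (mem_powerset.1 hs h)
    simp_rw [← update_piecewise_of_notMem s a b hjs, intervalIntegral.integral_const_mul, hftc,
      piecewise_insert, card_insert_of_notMem hjs]
    rw [← piecewise_eq_of_notMem s a b hjs, update_eq_self]
    ring
  · intro s hs
    simp_rw [← update_piecewise_of_notMem s a b fun h => hj (mem_powerset.1 hs h)]
    exact (continuous_const.mul (hslice _)).intervalIntegrable _ _

theorem enorm_boxDiffOn_le_lmarginal (ν : Fin p → Measure ℝ) [∀ j, SigmaFinite (ν j)]
    {l : List (Fin p)} (hl : l.Nodup) {g : (Fin p → ℝ) → ℝ} (hg : ContDiff ℝ l.length g)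
    {a b : Fin p → ℝ} (hab : ∀ j ∈ l, a j ≤ b j)
    (hν : ∀ j ∈ l, ν j = volume.restrict (Set.Ioc (a j) (b j))) :
    ‖boxDiffOn p l.toFinset g a b‖ₑ ≤
      (∫⋯∫⁻_l.toFinset, fun y => ‖partialDerivList p l g y‖ₑ ∂ν) b := by
  -- `partialDerivList p (l ++ [j])` differentiates in `j` first, so peel off the last coordinate.
  induction l using List.reverseRecOn generalizing g b with
  | nil => simp [partialDerivList]
  | append_singleton l j ih =>
    rw [List.nodup_append_comm, List.singleton_append, List.nodup_cons] at hl
    obtain ⟨hjl, hl⟩ := hl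
    have hg₁ : ContDiff ℝ 1 g := hg.of_le (by simp)
    have hdg : ContDiff ℝ l.length (partialDerivList p [j] g) :=
      contDiff_partialDerivList [j] (by simpa using hg)
    have hmeas : Measurable fun y => ‖partialDerivList p l (partialDerivList p [j] g) y‖ₑ :=
      (contDiff_partialDerivList l (n := 0) (by simpa using hdg)).continuous.measurable.enorm
    have hjb : a j ≤ b j := hab j (by simp)
    have hl_update : ∀ t, ∀ k ∈ l, update b j t k = b k := fun t k hk =>
      update_of_ne (ne_of_mem_of_not_mem hk hjl) _ _
    rw [List.toFinset_append, List.toFinset_cons, List.toFinset_nil, insert_empty, union_comm,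
      ← insert_eq, boxDiffOn_insert (by simpa using hjl) hg₁, partialDerivList_append_singleton,
      lmarginal_insert _ hmeas (by simpa using hjl), hν j (by simp),
      intervalIntegral.integral_of_le hjb]
    refine (enorm_integral_le_lintegral_enorm _).trans (lintegral_mono fun t => ?_)
    refine ih hl hdg (fun k hk => ?_) (fun k hk => ?_)
    · rw [hl_update t k hk]; exact hab k (by simp [hk])
    · rw [hl_update t k hk]; exact hν k (by simp [hk])

end BoxDifference

section Grid

variable {p : ℕ}

theorem enorm_boxDiffOn_le_setLIntegral (α : Finset (Fin p)) {f : (Fin p → ℝ) → ℝ}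
    (hf : ContDiff ℝ α.card f) {a b : Fin p → ℝ} (hab : ∀ j ∈ α, a j ≤ b j)
    (hb : ∀ j ∉ α, b j = 1) :
    ‖boxDiffOn p α f a b‖ₑ ≤
      ∫⁻ y in Set.univ.pi fun j => if j ∈ α then Set.Ioc (a j) (b j) else Set.Ioc 0 1,
        ‖partialDerivList p (α.sort (· ≤ ·)) f (fun j => if j ∈ α then y j else 1)‖ₑ := by
  set B : Fin p → Set ℝ := fun j => if j ∈ α then Set.Ioc (a j) (b j) else Set.Ioc 0 1
  set ν : Fin p → Measure ℝ := fun j => volume.restrict (B j)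
  have hprob : ∀ j ∉ α, IsProbabilityMeasure (ν j) := fun j hj => ⟨by simp [ν, B, hj]⟩
  have hcont : Continuous (partialDerivList p (α.sort (· ≤ ·)) f) :=
    (contDiff_partialDerivList _ (n := 0) (by simpa using hf)).continuous
  calc ‖boxDiffOn p α f a b‖ₑ
      ≤ (∫⋯∫⁻_α, fun y => ‖partialDerivList p (α.sort (· ≤ ·)) f y‖ₑ ∂ν) b := by
        simpa using enorm_boxDiffOn_le_lmarginal ν (sort_nodup α (· ≤ ·)) (by simpa using hf)
          (fun j hj => hab j (by simpa using hj)) (fun j hj => by simp [ν, B, (mem_sort _).1 hj])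
    _ = (∫⋯∫⁻_α, fun y => ‖partialDerivList p (α.sort (· ≤ ·)) f y‖ₑ ∂ν) (fun _ => 1) :=
        lmarginal_congr _ _ hb
    _ = ∫⁻ y, ‖partialDerivList p (α.sort (· ≤ ·)) f (α.piecewise y fun _ => 1)‖ₑ
          ∂Measure.pi ν :=
        lmarginal_eq_lintegral_piecewise ν α hprob hcont.measurable.enorm _
    _ = _ := by rw [volume_pi, Measure.restrict_pi_pi]; rfl

def gridCell (α : Finset (Fin p)) (t : Fin p → ℕ → ℝ) (i : Fin p → ℕ) : Set (Fin p → ℝ) :=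
  Set.univ.pi fun j => if j ∈ α then Set.Ioc (t j (i j)) (t j (i j + 1)) else Set.Ioc 0 1

theorem measurableSet_gridCell (α : Finset (Fin p)) (t : Fin p → ℕ → ℝ) (i : Fin p → ℕ) :
    MeasurableSet (gridCell α t i) :=
  .univ_pi fun j => by split_ifs <;> exact measurableSet_Ioc

variable {α : Finset (Fin p)} {m : Fin p → ℕ} {t : Fin p → ℕ → ℝ}

theorem gridCell_subset_unitCube (ht : ∀ j ∈ α, Monotone (t j) ∧ t j 0 = 0 ∧ t j (m j) = 1)
    {i : Fin p → ℕ} (hi : i ∈ Fintype.piFinset fun j => range (if j ∈ α then m j else 1)) :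
    gridCell α t i ⊆ Set.univ.pi fun _ => Set.Icc 0 1 := by
  refine Set.pi_mono fun j _ => ?_
  have hij := Fintype.mem_piFinset.1 hi j
  split_ifs at hij ⊢ with hj
  · obtain ⟨hmono, h0, hm⟩ := ht j hj
    refine Set.Ioc_subset_Icc_self.trans (Set.Icc_subset_Icc ?_ ?_)
    · exact h0 ▸ hmono (Nat.zero_le _)
    · exact hm ▸ hmono (mem_range.1 hij)
  · exact Set.Ioc_subset_Icc_self

theorem pairwiseDisjoint_gridCell (hmono : ∀ j ∈ α, Monotone (t j)) :
    (Fintype.piFinset fun j => range (if j ∈ α then m j else 1) : Set (Fin p → ℕ)).PairwiseDisjoint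
      (gridCell α t) := by
  intro i hi i' hi' hne
  obtain ⟨j, hj⟩ := Function.ne_iff.1 hne
  have hjα : j ∈ α := by
    by_contra hjα
    have h := Fintype.mem_piFinset.1 hi j
    have h' := Fintype.mem_piFinset.1 hi' j
    simp only [hjα, if_false, range_one, mem_singleton] at h h'
    exact hj (h.trans h'.symm)
  refine Set.disjoint_left.2 fun y hy hy' => ?_
  have hyj := Set.mem_univ_pi.1 hy j
  have hyj' := Set.mem_univ_pi.1 hy' j
  simp only [hjα, if_true] at hyj hyj'
  rcases hj.lt_or_gt with h | h
  · linarith [hmono j hjα (Nat.succ_le_of_lt h), hyj.2, hyj'.1]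
  · linarith [hmono j hjα (Nat.succ_le_of_lt h), hyj.1, hyj'.2]

theorem sum_setLIntegral_gridCell_le (ht : ∀ j ∈ α, Monotone (t j) ∧ t j 0 = 0 ∧ t j (m j) = 1)
    (G : (Fin p → ℝ) → ℝ≥0∞) :
    ∑ i ∈ Fintype.piFinset (fun j => range (if j ∈ α then m j else 1)),
        ∫⁻ y in gridCell α t i, G y ≤
      ∫⁻ y in Set.univ.pi fun _ => Set.Icc 0 1, G y := by
  rw [← lintegral_biUnion_finset (pairwiseDisjoint_gridCell fun j hj => (ht j hj).1)
    fun i _ => measurableSet_gridCell α t i]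
  exact lintegral_mono_set (Set.iUnion₂_subset fun i hi => gridCell_subset_unitCube ht hi)

end Grid

section Variation

variable {p : ℕ}

theorem vitaliVar_le_integral (α : Finset (Fin p)) {f : (Fin p → ℝ) → ℝ}
    (hf : ContDiff ℝ α.card f) :
    vitaliVar p α f ≤
      ∫ y in Set.univ.pi (fun _ : Fin p => Set.Icc (0 : ℝ) 1),
        |partialDerivList p (α.sort (· ≤ ·)) f (fun j => if j ∈ α then y j else 1)| := by
  set G : (Fin p → ℝ) → ℝ := fun y =>
    partialDerivList p (α.sort (· ≤ ·)) f (fun j => if j ∈ α then y j else 1)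
  have hG : Continuous G :=
    (contDiff_partialDerivList _ (n := 0) (by simpa using hf)).continuous.comp
      (continuous_pi fun j => by split_ifs <;> fun_prop)
  have hfin : ∫⁻ y in Set.univ.pi (fun _ : Fin p => Set.Icc (0 : ℝ) 1), ‖G y‖ₑ ≠ ⊤ :=
    (hG.continuousOn.integrableOn_compact (isCompact_univ_pi fun _ => isCompact_Icc)).2.ne
  have hint : ∫ y in Set.univ.pi (fun _ : Fin p => Set.Icc (0 : ℝ) 1), |G y| =
      (∫⁻ y in Set.univ.pi (fun _ : Fin p => Set.Icc (0 : ℝ) 1), ‖G y‖ₑ).toReal :=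
    integral_norm_eq_lintegral_enorm hG.aestronglyMeasurable
  rw [hint]
  refine Real.sSup_le ?_ ENNReal.toReal_nonneg
  rintro v ⟨m, t, ht, rfl⟩
  rw [← ENNReal.ofReal_le_iff_le_toReal hfin, ENNReal.ofReal_sum_of_nonneg fun _ _ => abs_nonneg _]
  refine le_trans (sum_le_sum fun i _ => ?_) (sum_setLIntegral_gridCell_le ht _)
  rw [← Real.enorm_eq_ofReal_abs]
  refine (enorm_boxDiffOn_le_setLIntegral α hf (fun j hj => ?_) fun j hj => if_neg hj).trans_eq ?_
  · simp only [hj, if_true]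
    exact (ht j hj).1 (Nat.le_succ _)
  · refine congrArg (fun s => ∫⁻ y in s, ‖G y‖ₑ) (Set.pi_congr rfl fun j _ => ?_)
    split_ifs <;> rfl

end Variation

/-- For a p-times continuously differentiable f on [0,1]^p, the Hardy–Krause
variation is bounded by the sum over nonempty coordinate subsets α of the
integrals of the mixed partials |∂^{|α|}f/∂x_α| evaluated at (x_α, 1_{-α}). -/
theorem hkVar_le_sum_integral_partials (p : ℕ) (f : (Fin p → ℝ) → ℝ)
    (hf : ContDiff ℝ p f) :
    hkVar p f ≤
      ∑ α ∈ (Finset.univ : Finset (Fin p)).powerset.filter (fun α => α.Nonempty),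
        ∫ y in Set.univ.pi (fun _ : Fin p => Set.Icc (0 : ℝ) 1),
          |partialDerivList p (α.sort (· ≤ ·)) f (fun j => if j ∈ α then y j else 1)| :=
  sum_le_sum fun α _ => vitaliVar_le_integral α <| hf.of_le <| by
    exact_mod_cast (card_le_univ α).trans_eq (Fintype.card_fin p)
end
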